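/- (First-order rigid frameworks, Corollary.) Suppose the framework (p,E) is first-order rigid relative to 𝒞, quantitatively: there is σ₀ > 0 with |R(p)v| ≥ σ₀|v| for all v ∈ 𝒞. Then: (i) every q ∈ 𝒞^p with q ≠ p and the same edge lengths as p (|q_i − q_j| = |p_i − p_j| for every edge (i,j) ∈ E) satisfies |q − p| ≥ (σ₀/(2√z))·(√5 − 1)/2; (ii) for every continuous path q : [0,1] → 𝒞^p with q(0) = p and with q(1) ≠ p having the same edge lengths as p, there exists t ∈ [0,1] with |e(q(t)) − e(p)| ≥ σ₀²(√(11/3) − 1)/(2√3·√z). -/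

import Mathlib

noncomputable section
open scoped BigOperators InnerProductSpace Classical

/-- Configuration space of `n` points in `ℝ^d`, with the Euclidean norm on `ℝ^{dn}`. -/
abbrev Config (n d : ℕ) := PiLp 2 (fun _ : Fin n => EuclideanSpace ℝ (Fin d))

/-- The rigidity operator `R(q)` applied to `u`: the `k`-th entry, for edge `k = (i,j)`,
is `⟨q_i - q_j, u_i - u_j⟩`. -/
def rig {n d m : ℕ} (E : Fin m → Fin n × Fin n) (q u : Config n d) :
    EuclideanSpace ℝ (Fin m) :=
  WithLp.toLp 2 fun k => ⟪q (E k).1 - q (E k).2, u (E k).1 - u (E k).2⟫_ℝ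

/-- The stress form `Ω_ω(v) = Σ_{(i,j)∈E} ω_{ij} |v_i - v_j|²`. -/
def stressForm {n d m : ℕ} (E : Fin m → Fin n × Fin n)
    (ω : EuclideanSpace ℝ (Fin m)) (v : Config n d) : ℝ :=
  ∑ k, ω k * ‖v (E k).1 - v (E k).2‖ ^ 2

/-- The vector `ωᵀ R(p) ∈ ℝ^{dn}` whose `l`-th block is `Σ_{j : (l,j)∈E} ω_{lj} (p_l - p_j)`. -/
def stressGrad {n d m : ℕ} (E : Fin m → Fin n × Fin n)
    (ω : EuclideanSpace ℝ (Fin m)) (p : Config n d) : Config n d :=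
  WithLp.toLp 2 fun l => ∑ k, (((if (E k).1 = l then (1:ℝ) else 0) - (if (E k).2 = l then (1:ℝ) else 0)) * ω k) •
    (p (E k).1 - p (E k).2)

/-- The vector `e(q) ∈ ℝ^m` of squared edge lengths. -/
def esq {n d m : ℕ} (E : Fin m → Fin n × Fin n) (q : Config n d) :
    EuclideanSpace ℝ (Fin m) :=
  WithLp.toLp 2 fun k => ‖q (E k).1 - q (E k).2‖ ^ 2

/-- `z` bounds the number of edges incident to each vertex (`z ≥` the maximum adjacency). -/
def degBound {n m : ℕ} (E : Fin m → Fin n × Fin n) (z : ℝ) : Prop :=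
  ∀ l : Fin n, ((Finset.univ.filter (fun k => (E k).1 = l ∨ (E k).2 = l)).card : ℝ) ≤ z

/-!
Write `q = p + v`. Expanding `|p_i - p_j + v_i - v_j|²` gives `e(q) - e(p) = 2 R(p) v + e(v)`,
and counting each vertex at most `z` times gives `|e(v)| ≤ √(8z) |v|²`. Hence
`|e(q) - e(p)| ≥ 2σ₀|v| - √(8z)|v|²`. If `e(q) = e(p)` and `v ≠ 0` this forces
`|v| ≥ 2σ₀/√(8z)`; along a path ending at such a `q`, the intermediate value theorem gives a time
with `|v| = σ₀/√(8z)`, where the quadratic lower bound attains its maximum `σ₀²/√(8z)`.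
Both constants of the corollary are below these.
-/

open Real Finset Set

section Framework

variable {n d m : ℕ} {E : Fin m → Fin n × Fin n}

lemma sum_endpoints_le_of_degBound (hE : ∀ k, (E k).1 ≠ (E k).2) {z : ℝ} (hdeg : degBound E z)
    {f : Fin n → ℝ} (hf : ∀ l, 0 ≤ f l) :
    ∑ k, (f (E k).1 + f (E k).2) ≤ z * ∑ l, f l := by
  have hpair : ∀ k, f (E k).1 + f (E k).2 = ∑ l, if (E k).1 = l ∨ (E k).2 = l then f l else 0 := by
    intro k
    rw [← sum_filter, show univ.filter (fun l => (E k).1 = l ∨ (E k).2 = l) = {(E k).1, (E k).2} by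
      ext; simp [eq_comm], sum_pair (hE k)]
  calc ∑ k, (f (E k).1 + f (E k).2)
      = ∑ l, ∑ k, if (E k).1 = l ∨ (E k).2 = l then f l else 0 := by
        simp_rw [hpair]; exact sum_comm
    _ = ∑ l, (#(univ.filter fun k => (E k).1 = l ∨ (E k).2 = l) : ℝ) * f l := by
        simp_rw [← sum_filter, sum_const, nsmul_eq_mul]
    _ ≤ ∑ l, z * f l := sum_le_sum fun l _ => mul_le_mul_of_nonneg_right (hdeg l) (hf l)
    _ = z * ∑ l, f l := (mul_sum _ _ _).symm

lemma esq_sub_esq (p q : Config n d) :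
    esq E q - esq E p = (2 : ℝ) • rig E p (q - p) + esq E (q - p) := by
  ext k
  have hedge : q (E k).1 - q (E k).2
      = (p (E k).1 - p (E k).2) + ((q - p) (E k).1 - (q - p) (E k).2) := by
    simp only [PiLp.sub_apply]; abel
  simp only [esq, rig, PiLp.add_apply, PiLp.sub_apply, PiLp.smul_apply, smul_eq_mul]
  rw [hedge, norm_add_sq_real]
  simp only [PiLp.sub_apply]
  ring

lemma norm_esq_le (hE : ∀ k, (E k).1 ≠ (E k).2) {z : ℝ} (hz : 0 ≤ z) (hdeg : degBound E z)
    (v : Config n d) : ‖esq E v‖ ≤ √(8 * z) * ‖v‖ ^ 2 := by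
  have hedge : ∀ k, (‖v (E k).1 - v (E k).2‖ ^ 2) ^ 2
      ≤ 8 * ((‖v (E k).1‖ ^ 2) ^ 2 + (‖v (E k).2‖ ^ 2) ^ 2) := by
    intro k
    have htri := norm_sub_le (v (E k).1) (v (E k).2)
    have hsq : ‖v (E k).1 - v (E k).2‖ ^ 2 ≤ 2 * (‖v (E k).1‖ ^ 2 + ‖v (E k).2‖ ^ 2) := by
      nlinarith [norm_nonneg (v (E k).1 - v (E k).2), sq_nonneg (‖v (E k).1‖ - ‖v (E k).2‖)]
    nlinarith [pow_le_pow_left₀ (sq_nonneg _) hsq 2,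
      sq_nonneg (‖v (E k).1‖ ^ 2 - ‖v (E k).2‖ ^ 2)]
  have hsq : ‖esq E v‖ ^ 2 ≤ 8 * z * (‖v‖ ^ 2) ^ 2 := calc
    ‖esq E v‖ ^ 2 = ∑ k, (‖v (E k).1 - v (E k).2‖ ^ 2) ^ 2 := by
        simp [EuclideanSpace.norm_sq_eq, esq]
    _ ≤ 8 * ∑ k, ((‖v (E k).1‖ ^ 2) ^ 2 + (‖v (E k).2‖ ^ 2) ^ 2) := by
        rw [mul_sum]; exact sum_le_sum fun k _ => hedge k
    _ ≤ 8 * (z * ∑ l, (‖v l‖ ^ 2) ^ 2) := by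
        gcongr
        exact sum_endpoints_le_of_degBound (f := fun l => (‖v l‖ ^ 2) ^ 2) hE hdeg
          fun l => by positivity
    _ ≤ 8 * (z * (∑ l, ‖v l‖ ^ 2) ^ 2) := by
        gcongr; exact sum_sq_le_sq_sum_of_nonneg fun l _ => by positivity
    _ = 8 * z * (‖v‖ ^ 2) ^ 2 := by rw [PiLp.norm_sq_eq_of_L2]; ring
  calc ‖esq E v‖ = √(‖esq E v‖ ^ 2) := (sqrt_sq (norm_nonneg _)).symm
    _ ≤ √(8 * z * (‖v‖ ^ 2) ^ 2) := sqrt_le_sqrt hsq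
    _ = √(8 * z) * ‖v‖ ^ 2 := by rw [sqrt_mul (by positivity), sqrt_sq (by positivity)]

lemma two_mul_sub_le_norm_esq_sub (hE : ∀ k, (E k).1 ≠ (E k).2) {z : ℝ} (hz : 0 ≤ z)
    (hdeg : degBound E z) {σ₀ : ℝ} {p q : Config n d}
    (hrig : σ₀ * ‖q - p‖ ≤ ‖rig E p (q - p)‖) :
    2 * σ₀ * ‖q - p‖ - √(8 * z) * ‖q - p‖ ^ 2 ≤ ‖esq E q - esq E p‖ := by
  rw [esq_sub_esq]
  have hlin : 2 * σ₀ * ‖q - p‖ ≤ ‖(2 : ℝ) • rig E p (q - p)‖ := by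
    rw [norm_smul, Real.norm_ofNat]; linarith
  linarith [norm_esq_le hE hz hdeg (q - p), norm_sub_le_norm_add ((2 : ℝ) • rig E p (q - p))
    (esq E (q - p))]

lemma two_mul_div_le_norm_sub_of_esq_eq (hE : ∀ k, (E k).1 ≠ (E k).2) {z : ℝ} (hz : 0 ≤ z)
    (hdeg : degBound E z) {σ₀ : ℝ} {p q : Config n d}
    (hrig : σ₀ * ‖q - p‖ ≤ ‖rig E p (q - p)‖) (hqp : q ≠ p) (hesq : esq E q = esq E p) :
    2 * σ₀ / √(8 * z) ≤ ‖q - p‖ := by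
  have hpos : 0 < ‖q - p‖ := norm_pos_iff.2 (sub_ne_zero.2 hqp)
  have h := two_mul_sub_le_norm_esq_sub hE hz hdeg hrig
  rw [hesq, sub_self, norm_zero] at h
  refine div_le_of_le_mul₀ (sqrt_nonneg _) hpos.le ?_
  nlinarith

lemma exists_norm_sub_eq_of_continuousOn {F : Type*} [SeminormedAddCommGroup F] {q : ℝ → F}
    {p : F} (hq : ContinuousOn q (Icc 0 1)) (hq0 : q 0 = p) {r : ℝ} (hr0 : 0 ≤ r)
    (hr1 : r ≤ ‖q 1 - p‖) : ∃ t ∈ Icc (0 : ℝ) 1, ‖q t - p‖ = r :=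
  intermediate_value_Icc zero_le_one (hq.sub continuousOn_const).norm
    ⟨by simpa [hq0] using hr0, hr1⟩

lemma exists_sq_div_le_norm_esq_sub (hE : ∀ k, (E k).1 ≠ (E k).2) {z : ℝ} (hz : 0 < z)
    (hdeg : degBound E z) {σ₀ : ℝ} (hσ₀ : 0 ≤ σ₀) {p : Config n d} {q : ℝ → Config n d}
    (hq : ContinuousOn q (Icc 0 1)) (hq0 : q 0 = p)
    (hrig : ∀ t ∈ Icc (0 : ℝ) 1, σ₀ * ‖q t - p‖ ≤ ‖rig E p (q t - p)‖)
    (hq1 : q 1 ≠ p) (hesq : esq E (q 1) = esq E p) :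
    ∃ t ∈ Icc (0 : ℝ) 1, σ₀ ^ 2 / √(8 * z) ≤ ‖esq E (q t) - esq E p‖ := by
  set κ := √(8 * z)
  have hκ : 0 < κ := sqrt_pos.2 (by positivity)
  have hfar : 2 * σ₀ / κ ≤ ‖q 1 - p‖ :=
    two_mul_div_le_norm_sub_of_esq_eq hE hz.le hdeg (hrig 1 (right_mem_Icc.2 zero_le_one)) hq1
      hesq
  obtain ⟨t, ht, hdist⟩ := exists_norm_sub_eq_of_continuousOn hq hq0 (r := σ₀ / κ)
    (by positivity) (le_trans (by gcongr; linarith) hfar)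
  refine ⟨t, ht, le_of_eq_of_le ?_ (two_mul_sub_le_norm_esq_sub hE hz.le hdeg (hrig t ht))⟩
  rw [hdist]
  field_simp
  ring

end Framework

lemma le_two_mul_div_sqrt_eight_mul {σ₀ z : ℝ} (hσ₀ : 0 ≤ σ₀) :
    σ₀ / (2 * √z) * ((√5 - 1) / 2) ≤ 2 * σ₀ / √(8 * z) := by
  have h5 : √5 ≤ 3 := by rw [sqrt_le_left (by norm_num)]; norm_num
  have h8 : √8 ≤ 3 := by rw [sqrt_le_left (by norm_num)]; norm_num
  have hc : (√5 - 1) / 4 ≤ 2 / √8 := by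
    have h := mul_le_mul (by linarith : √5 - 1 ≤ 2) h8 (sqrt_nonneg 8) zero_le_two
    rw [le_div_iff₀ (by positivity)]; linarith
  rw [sqrt_mul (by norm_num) z]
  calc σ₀ / (2 * √z) * ((√5 - 1) / 2) = σ₀ / √z * ((√5 - 1) / 4) := by ring
    _ ≤ σ₀ / √z * (2 / √8) := by gcongr
    _ = 2 * σ₀ / (√8 * √z) := by ring

lemma le_sq_div_sqrt_eight_mul {σ₀ z : ℝ} :
    σ₀ ^ 2 * (√(11 / 3) - 1) / (2 * √3 * √z) ≤ σ₀ ^ 2 / √(8 * z) := by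
  have h11 : √(11 / 3) ≤ 2 := by rw [sqrt_le_left (by norm_num)]; norm_num
  have h3 : 3 / 2 ≤ √3 := by rw [le_sqrt (by norm_num) (by norm_num)]; norm_num
  have h8 : √8 ≤ 3 := by rw [sqrt_le_left (by norm_num)]; norm_num
  have hc : (√(11 / 3) - 1) / (2 * √3) ≤ 1 / √8 := by
    rw [div_le_div_iff₀ (by positivity) (by positivity)]; nlinarith [sqrt_nonneg 8]
  rw [sqrt_mul (by norm_num) z]
  calc σ₀ ^ 2 * (√(11 / 3) - 1) / (2 * √3 * √z)
        = σ₀ ^ 2 / √z * ((√(11 / 3) - 1) / (2 * √3)) := by ring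
    _ ≤ σ₀ ^ 2 / √z * (1 / √8) := by gcongr
    _ = σ₀ ^ 2 / (√8 * √z) := by ring

theorem first_order_rigid_corollary_general {n d m : ℕ} (E : Fin m → Fin n × Fin n)
    (hE : ∀ k, (E k).1 ≠ (E k).2)
    (p : Config n d) (C : Submodule ℝ (Config n d))
    (z : ℝ) (hz : 1 ≤ z) (hdeg : degBound E z)
    (σ₀ : ℝ) (hσ₀ : 0 < σ₀)
    (hrig : ∀ v ∈ C, σ₀ * ‖v‖ ≤ ‖rig E p v‖) :
    (∀ q : Config n d, q - p ∈ C → q ≠ p →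
      (∀ k, ‖q (E k).1 - q (E k).2‖ = ‖p (E k).1 - p (E k).2‖) →
      (σ₀ / (2 * Real.sqrt z)) * ((Real.sqrt 5 - 1) / 2) ≤ ‖q - p‖) ∧
    (∀ q : ℝ → Config n d, ContinuousOn q (Set.Icc 0 1) → q 0 = p →
      (∀ t ∈ Set.Icc (0:ℝ) 1, q t - p ∈ C) →
      q 1 ≠ p →
      (∀ k, ‖q 1 (E k).1 - q 1 (E k).2‖ = ‖p (E k).1 - p (E k).2‖) →
      ∃ t ∈ Set.Icc (0:ℝ) 1,
        σ₀ ^ 2 * (Real.sqrt (11 / 3) - 1) / (2 * Real.sqrt 3 * Real.sqrt z) ≤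
          ‖esq E (q t) - esq E p‖) := by
  have hz₀ : 0 < z := zero_lt_one.trans_le hz
  have hesq : ∀ q : Config n d, (∀ k, ‖q (E k).1 - q (E k).2‖ = ‖p (E k).1 - p (E k).2‖) →
      esq E q = esq E p := fun q h => by ext k; simp only [esq, PiLp.toLp_apply, h k]
  refine ⟨fun q hqC hqp hlen => ?_, fun q hq hq0 hqC hq1 hlen => ?_⟩
  · exact (le_two_mul_div_sqrt_eight_mul hσ₀.le).trans
      (two_mul_div_le_norm_sub_of_esq_eq hE hz₀.le hdeg (hrig _ hqC) hqp (hesq q hlen))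
  · obtain ⟨t, ht, hbound⟩ := exists_sq_div_le_norm_esq_sub hE hz₀ hdeg hσ₀.le hq hq0
      (fun t ht => hrig _ (hqC t ht)) hq1 (hesq _ hlen)
    exact ⟨t, ht, le_sq_div_sqrt_eight_mul.trans hbound⟩

/-- **Corollary (First-order rigid frameworks).** If `|R(p)v| ≥ σ₀|v|` on `𝒞` with `σ₀ > 0`,
then (i) any other configuration in `𝒞^p` with the same edge lengths as `p` lies at distance
at least `(σ₀/(2√z))·(√5−1)/2` from `p`, and (ii) any continuous path in `𝒞^p` from `p` to a
different configuration with the same edge lengths passes through a point where the squared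
edge lengths have changed by at least `σ₀²(√(11/3)−1)/(2√3·√z)`. -/
theorem first_order_rigid_corollary {n d m : ℕ} (E : Fin m → Fin n × Fin n) (hm : 0 < m)
    (hE : ∀ k, (E k).1 ≠ (E k).2)
    (p : Config n d) (C : Submodule ℝ (Config n d))
    (z : ℝ) (hz : 1 ≤ z) (hdeg : degBound E z)
    (σ₀ : ℝ) (hσ₀ : 0 < σ₀)
    (hrig : ∀ v ∈ C, σ₀ * ‖v‖ ≤ ‖rig E p v‖) :
    (∀ q : Config n d, q - p ∈ C → q ≠ p →
      (∀ k, ‖q (E k).1 - q (E k).2‖ = ‖p (E k).1 - p (E k).2‖) →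
      (σ₀ / (2 * Real.sqrt z)) * ((Real.sqrt 5 - 1) / 2) ≤ ‖q - p‖) ∧
    (∀ q : ℝ → Config n d, ContinuousOn q (Set.Icc 0 1) → q 0 = p →
      (∀ t ∈ Set.Icc (0:ℝ) 1, q t - p ∈ C) →
      q 1 ≠ p →
      (∀ k, ‖q 1 (E k).1 - q 1 (E k).2‖ = ‖p (E k).1 - p (E k).2‖) →
      ∃ t ∈ Set.Icc (0:ℝ) 1,
        σ₀ ^ 2 * (Real.sqrt (11 / 3) - 1) / (2 * Real.sqrt 3 * Real.sqrt z) ≤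
          ‖esq E (q t) - esq E p‖) :=
  first_order_rigid_corollary_general E hE p C z hz hdeg σ₀ hσ₀ hrig
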